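/- arXiv:math/0207115 — 2 statements merged into one kernel-verified Lean document; each statement's English description precedes it below -/
import Mathlib

section
/- Let N ≥ 1, n ≥ 1, and number the tensor factors of (ℂ^N)^{⊗(n+1)} by 1,…,n+1. For complex numbers x, x_1,…,x_n with x ≠ x_k for all k and x_i ≠ x_j for all i ≠ j, the identity R_{12}(x,x_1) R_{13}(x,x_2) ⋯ R_{1,n+1}(x,x_n) · ∏^→_{1≤i<j≤n} R_{i+1,j+1}(x_i,x_j) · (1⊗P_0) = ∏^→_{1≤i<j≤n} R_{i+1,j+1}(x_i,x_j) · (1⊗P_0) · R_{12}(x,x_n) R_{13}(x,x_{n-1}) ⋯ R_{1,n+1}(x,x_1) holds for operators on (ℂ^N)^{⊗(n+1)}, where 1⊗P_0 reverses the order of the tensor factors 2,…,n+1. -/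
open scoped BigOperators
open scoped Classical
open Matrix

noncomputable section

/-! ### The group algebra of the symmetric group -/

/-- The group algebra `ℂ S_l` of the symmetric group of `{1,…,l}`. -/
abbrev GA (l : ℕ) : Type := MonoidAlgebra ℂ (Equiv.Perm (Fin l))

/-- The transposition `(i j)`, as an element of the group algebra over `R`. -/
def swapElt (R : Type) [CommSemiring R] {l : ℕ} (i j : Fin l) :
    MonoidAlgebra R (Equiv.Perm (Fin l)) :=
  MonoidAlgebra.of R (Equiv.Perm (Fin l)) (Equiv.swap i j)

/-! ### Partitions and standard tableaux -/

/-- A partition: an antitone sequence of parts (0-based indexing),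
with finitely many nonzero parts. -/
def IsPartitionFun (lam : ℕ → ℕ) : Prop :=
  Antitone lam ∧ ∃ r, ∀ i, r ≤ i → lam i = 0

/-- A partition of `l` (0-based indexing of the parts). -/
def IsPartitionOf (l : ℕ) (lam : ℕ → ℕ) : Prop :=
  Antitone lam ∧ lam l = 0 ∧ ∑ i ∈ Finset.range l, lam i = l

/-- `conjP lam j` is the 1-based conjugate part `λ'_{j+1}`, i.e. the length
of the `(j+1)`-st column of the Young diagram of `λ`. -/
def conjP (lam : ℕ → ℕ) (j : ℕ) : ℕ := Nat.card {i : ℕ // j < lam i}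

/-- A standard tableau of skew shape `λ/μ` with `n` boxes, in 0-based matrix
coordinates.  `pos k` is the box (row, column) containing the entry `k+1`;
entries increase left to right along rows and top to bottom along columns.
Taking `μ = 0` gives standard tableaux of the straight shape `λ`. -/
structure SkewStdTableau (n : ℕ) (mu lam : ℕ → ℕ) where
  pos : Fin n → ℕ × ℕ
  mem_lower : ∀ k, mu (pos k).1 ≤ (pos k).2
  mem_upper : ∀ k, (pos k).2 < lam (pos k).1
  inj : Function.Injective pos
  surj : ∀ i j : ℕ, mu i ≤ j → j < lam i → ∃ k, pos k = (i, j)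
  row_lt : ∀ k m : Fin n, (pos k).1 = (pos m).1 → (pos k).2 < (pos m).2 → k < m
  col_lt : ∀ k m : Fin n, (pos k).2 = (pos m).2 → (pos k).1 < (pos m).1 → k < m

namespace SkewStdTableau

variable {n : ℕ} {mu lam : ℕ → ℕ}

/-- The content `j - i` of the box containing the entry `k+1`. -/
def content (T : SkewStdTableau n mu lam) (k : Fin n) : ℤ :=
  ((T.pos k).2 : ℤ) - ((T.pos k).1 : ℤ)

/-- `T` is the row tableau: the entries are ordered by rows, left to right
within each row. -/
def IsRowTableau (T : SkewStdTableau n mu lam) : Prop :=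
  ∀ k m : Fin n, k < m ↔
    ((T.pos k).1 < (T.pos m).1 ∨ ((T.pos k).1 = (T.pos m).1 ∧ (T.pos k).2 < (T.pos m).2))

/-- `T` is the column tableau: the entries are ordered by columns. -/
def IsColTableau (T : SkewStdTableau n mu lam) : Prop :=
  ∀ k m : Fin n, k < m ↔
    ((T.pos k).2 < (T.pos m).2 ∨ ((T.pos k).2 = (T.pos m).2 ∧ (T.pos k).1 < (T.pos m).1))

/-- `p_Λ`: the sum of all permutations preserving each row of `Λ`. -/
def pElt (T : SkewStdTableau n mu lam) : GA n :=
  ∑ s : Equiv.Perm (Fin n),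
    if ∀ k, (T.pos (s k)).1 = (T.pos k).1 then MonoidAlgebra.of ℂ _ s else 0

/-- `q_Λ`: the signed sum of all permutations preserving each column of `Λ`. -/
def qElt (T : SkewStdTableau n mu lam) : GA n :=
  ∑ s : Equiv.Perm (Fin n),
    if ∀ k, (T.pos (s k)).2 = (T.pos k).2
    then ((Equiv.Perm.sign s : ℤ) : ℂ) • MonoidAlgebra.of ℂ _ s else 0

end SkewStdTableau

/-! ### Ordered products over lexicographically ordered pairs -/

/-- The list of all pairs `(i,j)` with `i < j`, in lexicographic order. -/
def lexPairs (n : ℕ) : List (Fin n × Fin n) :=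
  ((List.finRange n).product (List.finRange n)).filter (fun p => p.1 < p.2)

/-! ### Rational functions: the field of fractions of a polynomial ring -/

/-- The field of rational functions in countably many variables over `ℂ`. -/
abbrev KK : Type := FractionRing (MvPolynomial ℕ ℂ)

/-- The canonical map from polynomials to rational functions. -/
def toKK : MvPolynomial ℕ ℂ →+* KK := algebraMap (MvPolynomial ℕ ℂ) KK

/-- The rational function `g` is regular at the point `x`, with value `v` there:
`g = p/q` with `q(x) ≠ 0` and `p(x)/q(x) = v`. -/
def RegularAtVal (g : KK) (x : ℕ → ℂ) (v : ℂ) : Prop :=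
  ∃ p q : MvPolynomial ℕ ℂ,
    g * toKK q = toKK p ∧ MvPolynomial.eval x q ≠ 0 ∧
      MvPolynomial.eval x p = v * MvPolynomial.eval x q

/-- The group algebra of `S_l` with coefficients in the field `KK`
of rational functions. -/
abbrev GAK (l : ℕ) : Type := MonoidAlgebra KK (Equiv.Perm (Fin l))

/-- A `ℂ S_l`-valued rational function is regular at a point with a given value
iff all its coefficient rational functions are. -/
def GARegularAtVal {l : ℕ} (F : GAK l) (x : ℕ → ℂ) (v : GA l) : Prop :=
  ∀ s : Equiv.Perm (Fin l), RegularAtVal (F.coeff s) x (v.coeff s)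

/-- The factor `1 - (i j)/(c_i - c_j + t_i - t_j)` of the fusion procedure,
where the variable `t_k` is the polynomial variable `X (var k)` (so that the
constraints `t_k = t_m` for `var k = var m` are built in). -/
def fusionFactor {l : ℕ} (c : Fin l → ℤ) (var : Fin l → ℕ) (i j : Fin l) : GAK l :=
  (1 : GAK l) -
    (toKK (MvPolynomial.C ((c i - c j : ℤ) : ℂ)
        + MvPolynomial.X (var i) - MvPolynomial.X (var j)))⁻¹ • swapElt KK i j

/-- The full ordered product `∏→_{1≤i<j≤l} (1 - (i j)/(c_i-c_j+t_i-t_j))`. -/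
def fusionProd {l : ℕ} (c : Fin l → ℤ) (var : Fin l → ℕ) : GAK l :=
  ((lexPairs l).map (fun p => fusionFactor c var p.1 p.2)).prod

/-- The partial ordered product over the lexicographically ordered pairs
`(i,j)`, `i<j`, satisfying the predicate `P`. -/
def fusionProdOn {l : ℕ} (c : Fin l → ℤ) (var : Fin l → ℕ)
    (P : Fin l × Fin l → Prop) : GAK l :=
  (((lexPairs l).filter (fun p => P p)).map (fun p => fusionFactor c var p.1 p.2)).prod

/-- The factor `1 - (i j)/(x - y)` of the fusion procedure, over `ℂ`. -/
def cFactor {l : ℕ} (i j : Fin l) (x y : ℂ) : GA l :=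
  (1 : GA l) - (x - y)⁻¹ • swapElt ℂ i j

/-! ### Operators on tensor powers of ℂ^L, as matrices -/

/-- Index set of the standard basis of `(ℂ^L)^{⊗n}`. -/
abbrev TIdx (L n : ℕ) : Type := Fin n → Fin L

/-- Operators on `(ℂ^L)^{⊗n}` with entries in `R`, encoded as matrices. -/
abbrev TOp (R : Type) (L n : ℕ) : Type := Matrix (TIdx L n) (TIdx L n) R

/-- The operator on `(ℂ^L)^{⊗n}` permuting the tensor factors according
to the permutation `s`. -/
def permMat {L n : ℕ} (s : Equiv.Perm (Fin n)) : TOp ℂ L n :=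
  fun f g => if g = f ∘ s then 1 else 0

/-- The operator `P_{kl}` exchanging the `k`-th and `l`-th tensor factors. -/
def Pmat {L n : ℕ} (k l : Fin n) : TOp ℂ L n := permMat (Equiv.swap k l)

/-- The operator `Q_{kl}` acting as
`Q(L) : u ⊗ v ↦ ⟨u,v⟩ ∑_a u_a ⊗ v_a` in the `k`-th and `l`-th tensor factors
(for the bilinear form with Gram matrix `B`, `⟨u,v⟩ = uᵀ B v`, and dual bases
`u_a, v_a`), and as the identity elsewhere. -/
def Qmat {L n : ℕ} (B : Matrix (Fin L) (Fin L) ℂ) (k l : Fin n) : TOp ℂ L n :=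
  fun f g =>
    if ∀ i, i ≠ k → i ≠ l → g i = f i then B⁻¹ (f l) (f k) * B (g k) (g l) else 0

/-- The action of an element of the group algebra `ℂ S_l` on `(ℂ^L)^{⊗l}`,
by permutations of the tensor factors. -/
def gaMat (L : ℕ) {l : ℕ} (a : GA l) : TOp ℂ L l :=
  Finsupp.sum a.coeff (fun s c => c • permMat s)

/-- The rational R-matrix `R_{kl}(x,y) = 1 - P_{kl}/(x-y)`. -/
def Rmat (L : ℕ) {n : ℕ} (k l : Fin n) (x y : ℂ) : TOp ℂ L n :=
  1 - (x - y)⁻¹ • Pmat k l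

/-- `R̃_{kl}(x,y) = 1 + Q_{kl}/(x+y)`. -/
def Rtil {L : ℕ} (B : Matrix (Fin L) (Fin L) ℂ) {n : ℕ} (k l : Fin n) (x y : ℂ) :
    TOp ℂ L n :=
  1 + (x + y)⁻¹ • Qmat B k l

/-- `R̄_{kl}(x,y) = 1 - Q_{kl}/(x+y+L)`. -/
def Rbar {L : ℕ} (B : Matrix (Fin L) (Fin L) ℂ) {n : ℕ} (k l : Fin n) (x y : ℂ) :
    TOp ℂ L n :=
  1 - (x + y + (L : ℂ))⁻¹ • Qmat B k l

/-- An operator-valued rational function is regular at a point with a given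
value iff all its matrix entries are. -/
def MatRegularAtVal {L n : ℕ} (G : TOp KK L n) (x : ℕ → ℂ) (V : TOp ℂ L n) : Prop :=
  ∀ f g, RegularAtVal (G f g) x (V f g)

/-- The ordered product `∏→ (1 - P_{kl}/(c_k - c_l + t_k - t_l))` over all
lexicographically ordered pairs, with `t_k` the polynomial variable `X (var k)`. -/
def fusionRK (L : ℕ) {n : ℕ} (c : Fin n → ℤ) (var : Fin n → ℕ) : TOp KK L n :=
  ((lexPairs n).map (fun p =>
    (1 : TOp KK L n) -
      (toKK (MvPolynomial.C ((c p.1 - c p.2 : ℤ) : ℂ)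
          + MvPolynomial.X (var p.1) - MvPolynomial.X (var p.2)))⁻¹ •
        (Pmat p.1 p.2).map (algebraMap ℂ KK))).prod

/-- The ordered product `∏→ (1 - Q_{kl}/(c_k + c_l + t_k + t_l + a))` over all
lexicographically ordered pairs, with `t_k` the polynomial variable `X (var k)`. -/
def fusionQK {L : ℕ} (B : Matrix (Fin L) (Fin L) ℂ) {n : ℕ}
    (c : Fin n → ℤ) (var : Fin n → ℕ) (a : ℂ) : TOp KK L n :=
  ((lexPairs n).map (fun p =>
    (1 : TOp KK L n) -
      (toKK (MvPolynomial.C (((c p.1 + c p.2 : ℤ) : ℂ) + a)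
          + MvPolynomial.X (var p.1) + MvPolynomial.X (var p.2)))⁻¹ •
        (Qmat B p.1 p.2).map (algebraMap ℂ KK))).prod




/-- `θ_m`: the linear map on `ℂ S_l` keeping only the permutations which
preserve the subset `{1,…,m}` (0-based: `{0,…,m-1}`). -/
def theta (l m : ℕ) (a : GA l) : GA l :=
  ∑ s : Equiv.Perm (Fin l),
    if ∀ k : Fin l, (k : ℕ) < m → ((s k : ℕ) < m)
    then MonoidAlgebra.single s (a.coeff s) else 0

/-- `γ_m`: the linear map on `ℂ S_{l+1}` keeping only the permutations `s`
with `s(1) ∉ {2,…,m+1}` (0-based: `s 0 ∉ {1,…,m}`). -/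
def gammaMap (l m : ℕ) (a : GA (l + 1)) : GA (l + 1) :=
  ∑ s : Equiv.Perm (Fin (l + 1)),
    if (s 0 = 0 ∨ m < ((s 0 : Fin (l + 1)) : ℕ))
    then MonoidAlgebra.single s (a.coeff s) else 0

/-- `γ'_m`: the linear map on `ℂ S_{l+1}` keeping only the permutations `s`
with `s⁻¹(1) ∉ {2,…,m+1}`. -/
def gammaMap' (l m : ℕ) (a : GA (l + 1)) : GA (l + 1) :=
  ∑ s : Equiv.Perm (Fin (l + 1)),
    if (s⁻¹ 0 = 0 ∨ m < ((s⁻¹ 0 : Fin (l + 1)) : ℕ))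
    then MonoidAlgebra.single s (a.coeff s) else 0

/-- The embedding `S_l → S_{l+1}` induced by the shift `k ↦ k+1` of `{1,…,l}`
onto `{2,…,l+1}` (the new point `1` is fixed). -/
def shiftPerm {l : ℕ} (s : Equiv.Perm (Fin l)) : Equiv.Perm (Fin (l + 1)) :=
  Equiv.permCongr (finCongr (Nat.add_comm 1 l))
    (Equiv.permCongr finSumFinEquiv (Equiv.sumCongr (Equiv.refl (Fin 1)) s))

/-- The embedding `ι_1 : ℂ S_l → ℂ S_{l+1}` induced by the shift `k ↦ k+1`. -/
def iota1 {l : ℕ} (a : GA l) : GA (l + 1) :=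
  MonoidAlgebra.ofCoeff (Finsupp.mapDomain shiftPerm a.coeff)

/-- The permutation of `{1,…,n+1}` fixing `1` and reversing `2,…,n+1`. -/
def revPerm (n : ℕ) : Equiv.Perm (Fin (n + 1)) :=
  Function.Involutive.toPerm
    (fun x => if h : (x : ℕ) = 0 then x
      else ⟨n + 1 - (x : ℕ), by have := x.isLt; omega⟩)
    (by
      intro x
      by_cases h : (x : ℕ) = 0
      · simp [h]
      · have hle : (x : ℕ) ≤ n := Nat.lt_succ_iff.mp x.isLt
        have h1 : 1 ≤ (x : ℕ) := Nat.one_le_iff_ne_zero.mpr h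
        simp only [dif_neg h]
        have h2 : ((⟨n + 1 - (x : ℕ), by omega⟩ : Fin (n + 1)) : ℕ) ≠ 0 := by
          simp only []
          omega
        simp only [dif_neg h2]
        ext
        simp only []
        omega)

/-- Lexicographic strict order on pairs. -/
def lexLT {l : ℕ} (p q : Fin l × Fin l) : Prop :=
  p.1 < q.1 ∨ (p.1 = q.1 ∧ p.2 < q.2)

/-- Lexicographic order on pairs. -/
def lexLE {l : ℕ} (p q : Fin l × Fin l) : Prop := lexLT p q ∨ p = q


/-- The operator `1 ⊗ F` on `(ℂ^L)^{⊗(l+1)}`, acting as `F` in the last `l`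
tensor factors and as the identity in the first one. -/
def extMat {L l : ℕ} (F : TOp ℂ L l) : TOp ℂ L (l + 1) :=
  fun f g => if f 0 = g 0 then F (fun k => f k.succ) (fun k => g k.succ) else 0




/-! ### Auxiliary development for Statement 16 -/

section Statement16Aux

open Equiv MonoidAlgebra

/- Swap identities -/
private theorem swap_comm_disj {α : Type*} [DecidableEq α] {i j k l : α}
    (h1 : i ≠ k) (h2 : i ≠ l) (h3 : j ≠ k) (h4 : j ≠ l) :
    Equiv.swap i j * Equiv.swap k l = Equiv.swap k l * Equiv.swap i j := by
  ext x
  simp only [Equiv.Perm.mul_apply, Equiv.swap_apply_def]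
  split_ifs <;> simp_all

private theorem swapA {α : Type*} [DecidableEq α] {i j k : α}
    (hij : i ≠ j) (hik : i ≠ k) (hjk : j ≠ k) :
    Equiv.swap i j * Equiv.swap i k = Equiv.swap i k * Equiv.swap j k := by
  ext x
  simp only [Equiv.Perm.mul_apply, Equiv.swap_apply_def]
  split_ifs <;> simp_all

private theorem swapB {α : Type*} [DecidableEq α] {i j k : α}
    (hij : i ≠ j) (hik : i ≠ k) (hjk : j ≠ k) :
    Equiv.swap i k * Equiv.swap j k = Equiv.swap j k * Equiv.swap i j := by
  ext x
  simp only [Equiv.Perm.mul_apply, Equiv.swap_apply_def]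
  split_ifs <;> simp_all

/- Group algebra identities -/
private theorem ga_ybe {G : Type*} [Group G] (s1 s2 s3 : G) (a b c : ℂ)
    (h23 : s2 * s3 = s1 * s2) (h31 : s3 * s1 = s1 * s2)
    (h32 : s3 * s2 = s2 * s1) (h13 : s1 * s3 = s2 * s1)
    (h123 : s1 * (s1 * s2) = s2) (h321 : s3 * (s2 * s1) = s2)
    (hsc : a * b + b * c = a * c) :
    ((1 : MonoidAlgebra ℂ G) - a • of ℂ G s1) * ((1 : MonoidAlgebra ℂ G) - b • of ℂ G s2) *
        ((1 : MonoidAlgebra ℂ G) - c • of ℂ G s3)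
      = ((1 : MonoidAlgebra ℂ G) - c • of ℂ G s3) * ((1 : MonoidAlgebra ℂ G) - b • of ℂ G s2) *
          ((1 : MonoidAlgebra ℂ G) - a • of ℂ G s1) := by
  simp only [mul_sub, sub_mul, one_mul, mul_one, smul_mul_assoc, mul_smul_comm, smul_smul,
    ← _root_.map_mul, mul_assoc]
  rw [h23, h31, h32, h13, h123, h321]
  match_scalars <;> (first | ring1 | linear_combination hsc | linear_combination -hsc)

private theorem ga_comm {G : Type*} [Group G] (s t : G) (a b : ℂ) (hst : s * t = t * s) :
    ((1 : MonoidAlgebra ℂ G) - a • of ℂ G s) * ((1 : MonoidAlgebra ℂ G) - b • of ℂ G t)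
      = ((1 : MonoidAlgebra ℂ G) - b • of ℂ G t) * ((1 : MonoidAlgebra ℂ G) - a • of ℂ G s) := by
  simp only [mul_sub, sub_mul, one_mul, mul_one, smul_mul_assoc, mul_smul_comm, smul_smul,
    ← _root_.map_mul, hst]
  match_scalars <;> ring

/- cFactor identities -/
private theorem cFactor_def {m : ℕ} (i j : Fin m) (u v : ℂ) :
    cFactor i j u v = (1 : GA m) - (u - v)⁻¹ • of ℂ (Equiv.Perm (Fin m)) (Equiv.swap i j) := rfl

private theorem cFactor_comm {m : ℕ} {i j k l : Fin m} (h1 : i ≠ k) (h2 : i ≠ l)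
    (h3 : j ≠ k) (h4 : j ≠ l) (u v w z : ℂ) :
    cFactor i j u v * cFactor k l w z = cFactor k l w z * cFactor i j u v := by
  rw [cFactor_def, cFactor_def]
  exact ga_comm _ _ _ _ (swap_comm_disj h1 h2 h3 h4)

private theorem cFactor_ybe {m : ℕ} {i j k : Fin m} (hij : i ≠ j) (hik : i ≠ k) (hjk : j ≠ k)
    {x u v : ℂ} (hxu : x ≠ u) (hxv : x ≠ v) (huv : u ≠ v) :
    cFactor i j x u * cFactor i k x v * cFactor j k u v
      = cFactor j k u v * cFactor i k x v * cFactor i j x u := by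
  have hA := swapA hij hik hjk
  have hB := swapB hij hik hjk
  have hAB := hA.trans hB
  rw [cFactor_def, cFactor_def, cFactor_def]
  refine ga_ybe _ _ _ _ _ _ hA.symm hAB.symm ?_ ?_ ?_ ?_ ?_
  · have := congrArg Inv.inv hA
    simpa [_root_.mul_inv_rev, Equiv.swap_inv] using this.symm
  · have := congrArg Inv.inv hAB
    simpa [_root_.mul_inv_rev, Equiv.swap_inv] using this.symm
  · rw [← mul_assoc, Equiv.swap_mul_self, one_mul]
  · have h32 : Equiv.swap j k * Equiv.swap i k = Equiv.swap i k * Equiv.swap i j := by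
      have := congrArg Inv.inv hA
      simpa [_root_.mul_inv_rev, Equiv.swap_inv] using this.symm
    rw [← h32, ← mul_assoc, Equiv.swap_mul_self, one_mul]
  · have h2 : x - u ≠ 0 := sub_ne_zero.mpr hxu
    have h3 : x - v ≠ 0 := sub_ne_zero.mpr hxv
    have h4 : u - v ≠ 0 := sub_ne_zero.mpr huv
    field_simp
    ring

/- pairsList -/
private def pairsList0 {α : Type*} : List α → List (α × α)
  | [] => []
  | a :: l => (l.map fun b => (a, b)) ++ pairsList0 l

private theorem pairsList0_map {α β : Type*} (f : α → β) :
    ∀ l : List α, pairsList0 (l.map f) = (pairsList0 l).map (Prod.map f f)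
  | [] => rfl
  | a :: l => by
    simp [pairsList0, pairsList0_map f l, List.map_map, Function.comp_def, Prod.map]

private theorem mem_pairsList0 {α : Type*} {p : α × α} :
    ∀ {l : List α}, p ∈ pairsList0 l → p.1 ∈ l ∧ p.2 ∈ l
  | [], h => by simp [pairsList0] at h
  | a :: l, h => by
    simp only [pairsList0, List.mem_append, List.mem_map] at h
    rcases h with h | h
    · obtain ⟨b, hb, rfl⟩ := h
      exact ⟨List.mem_cons_self, List.mem_cons_of_mem _ hb⟩
    · obtain ⟨h1, h2⟩ := mem_pairsList0 h
      exact ⟨List.mem_cons_of_mem _ h1, List.mem_cons_of_mem _ h2⟩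

private theorem sorted_product_filter {α : Type*} [LinearOrder α] :
    ∀ (l : List α), l.Pairwise (· < ·) →
      ((l ×ˢ l).filter fun p => p.1 < p.2) = pairsList0 l
  | [], _ => rfl
  | a :: t, hp => by
    have hat : ∀ b ∈ t, a < b := fun b hb => (List.pairwise_cons.mp hp).1 b hb
    have hpt : t.Pairwise (· < ·) := (List.pairwise_cons.mp hp).2
    have step : ∀ (s : List α), s.Pairwise (· < ·) → (∀ b ∈ s, a < b) →
        ((s ×ˢ (a :: t)).filter fun p => p.1 < p.2) = ((s ×ˢ t).filter fun p => p.1 < p.2) := by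
      intro s hs has
      induction s with
      | nil => rfl
      | cons c s ih =>
        have hcs : s.Pairwise (· < ·) := (List.pairwise_cons.mp hs).2
        have hcas : ∀ b ∈ s, a < b := fun b hb => has b (List.mem_cons_of_mem _ hb)
        have hac : a < c := has c (List.mem_cons_self)
        rw [List.product_cons, List.product_cons, List.filter_append, List.filter_append,
          ih hcs hcas]
        congr 1
        simp only [List.map_cons, List.filter_cons]
        have : ¬ (c < a) := not_lt.mpr hac.le
        simp [this]
    rw [List.product_cons, List.filter_append, step t hpt hat, sorted_product_filter t hpt]
    have h1 : ((a :: t).map fun b => (a, b)).filter (fun p => p.1 < p.2)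
        = t.map fun b => (a, b) := by
      rw [List.filter_map]
      have : ((a :: t).filter fun b => a < b) = t := by
        rw [List.filter_cons_of_neg (by simp)]
        exact List.filter_eq_self.mpr fun b hb => decide_eq_true (hat b hb)
      rw [show ((fun (p : α × α) => decide (p.1 < p.2)) ∘ fun b => (a, b))
          = fun b => decide (a < b) from rfl, this]
    rw [h1]
    rfl

private theorem lexPairs_eq (n : ℕ) : lexPairs n = pairsList0 (List.finRange n) :=
  sorted_product_filter (List.finRange n) (List.pairwise_lt_finRange n)

/- conjugation -/
private theorem of_mul_cFactor {m : ℕ} (s : Equiv.Perm (Fin m)) (k l : Fin m) (u v : ℂ) :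
    of ℂ (Equiv.Perm (Fin m)) s * cFactor k l u v
      = cFactor (s k) (s l) u v * of ℂ (Equiv.Perm (Fin m)) s := by
  rw [cFactor_def, cFactor_def]
  simp only [mul_sub, sub_mul, mul_one, one_mul, mul_smul_comm, smul_mul_assoc,
    ← _root_.map_mul]
  rw [Equiv.mul_swap_eq_swap_mul]

private theorem of_mul_cprod {m : ℕ} [NeZero m] (s : Equiv.Perm (Fin m)) (hs : s 0 = 0)
    {ι : Type} (l : List ι) (g : ι → Fin m) (c : ι → ℂ) (x : ℂ) :
    of ℂ (Equiv.Perm (Fin m)) s * (l.map fun i => cFactor 0 (g i) x (c i)).prod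
      = (l.map fun i => cFactor 0 (s (g i)) x (c i)).prod * of ℂ (Equiv.Perm (Fin m)) s := by
  induction l with
  | nil => simp
  | cons i l ih =>
    simp only [List.map_cons, List.prod_cons]
    rw [← mul_assoc, of_mul_cFactor, hs, mul_assoc, ih, ← mul_assoc]


/- step 1 of the induction: pulling one R-matrix through a row product -/
private theorem ga_step1 {m : ℕ} [NeZero m] (x : ℂ) (u : Fin m → ℂ) (a : Fin m)
    (L : List (Fin m)) (ha0 : a ≠ 0) (haL : a ∉ L) (h0L : (0 : Fin m) ∉ L) (hnd : L.Nodup)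
    (hxa : x ≠ u a) (hxL : ∀ p ∈ L, x ≠ u p) (haL2 : ∀ p ∈ L, u a ≠ u p) :
    cFactor 0 a x (u a) * (L.map fun p => cFactor 0 p x (u p)).prod *
        (L.map fun p => cFactor a p (u a) (u p)).prod
      = (L.map fun p => cFactor a p (u a) (u p)).prod *
        (L.map fun p => cFactor 0 p x (u p)).prod * cFactor 0 a x (u a) := by
  induction L with
  | nil => simp
  | cons b M ih =>
    have hbM : b ∉ M := (List.nodup_cons.mp hnd).1
    have hndM : M.Nodup := (List.nodup_cons.mp hnd).2
    have haM : a ∉ M := fun h => haL (List.mem_cons_of_mem _ h)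
    have h0M : (0 : Fin m) ∉ M := fun h => h0L (List.mem_cons_of_mem _ h)
    have hab : a ≠ b := fun h => haL (h ▸ List.mem_cons_self)
    have hb0 : b ≠ 0 := fun h => h0L (h ▸ List.mem_cons_self)
    have hxb : x ≠ u b := hxL b (List.mem_cons_self)
    have hab2 : u a ≠ u b := haL2 b (List.mem_cons_self)
    have hxM : ∀ p ∈ M, x ≠ u p := fun p hp => hxL p (List.mem_cons_of_mem _ hp)
    have haM2 : ∀ p ∈ M, u a ≠ u p := fun p hp => haL2 p (List.mem_cons_of_mem _ hp)
    simp only [List.map_cons, List.prod_cons]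
    set FM := (M.map fun p => cFactor 0 p x (u p)).prod with hFM
    set AM := (M.map fun p => cFactor a p (u a) (u p)).prod with hAM
    set r0a := cFactor 0 a x (u a) with hr0a
    set r0b := cFactor (0 : Fin m) b x (u b) with hr0b
    set rab := cFactor a b (u a) (u b) with hrab
    have hc1 : FM * rab = rab * FM := by
      rw [hFM]
      refine (Commute.list_prod_right _ rab fun y hy => ?_).eq.symm
      obtain ⟨p, hp, rfl⟩ := List.mem_map.mp hy
      exact cFactor_comm ha0 (fun h : a = p => haM (h ▸ hp)) hb0
        (fun h : b = p => hbM (h ▸ hp)) (u a) (u b) x (u p)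
    have hc2 : r0b * AM = AM * r0b := by
      rw [hAM]
      refine (Commute.list_prod_right _ r0b fun y hy => ?_).eq
      obtain ⟨p, hp, rfl⟩ := List.mem_map.mp hy
      exact cFactor_comm (Ne.symm ha0) (fun h : (0 : Fin m) = p => h0M (h ▸ hp))
        (Ne.symm hab) (fun h : b = p => hbM (h ▸ hp)) x (u b) (u a) (u p)
    have hybe : r0a * r0b * rab = rab * r0b * r0a :=
      cFactor_ybe (Ne.symm ha0) (Ne.symm hb0) hab hxa hxb hab2
    have hIH : r0a * FM * AM = AM * FM * r0a := ih haM h0M hndM hxM haM2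
    calc r0a * (r0b * FM) * (rab * AM)
        = r0a * r0b * (FM * rab) * AM := by noncomm_ring
      _ = r0a * r0b * (rab * FM) * AM := by rw [hc1]
      _ = r0a * r0b * rab * (FM * AM) := by noncomm_ring
      _ = rab * r0b * r0a * (FM * AM) := by rw [hybe]
      _ = rab * r0b * (r0a * FM * AM) := by noncomm_ring
      _ = rab * r0b * (AM * FM * r0a) := by rw [hIH]
      _ = rab * (r0b * AM) * (FM * r0a) := by noncomm_ring
      _ = rab * (AM * r0b) * (FM * r0a) := by rw [hc2]
      _ = rab * AM * (r0b * FM) * r0a := by noncomm_ring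

/- the main commutation lemma -/
private theorem ga_main {m : ℕ} [NeZero m] (x : ℂ) (u : Fin m → ℂ) :
    ∀ L : List (Fin m), (0 : Fin m) ∉ L → L.Nodup →
      (∀ p ∈ L, x ≠ u p) → (∀ p ∈ L, ∀ q ∈ L, p ≠ q → u p ≠ u q) →
      (L.map fun p => cFactor 0 p x (u p)).prod *
          ((pairsList0 L).map fun q => cFactor q.1 q.2 (u q.1) (u q.2)).prod
        = ((pairsList0 L).map fun q => cFactor q.1 q.2 (u q.1) (u q.2)).prod *
          (L.reverse.map fun p => cFactor 0 p x (u p)).prod := by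
  intro L
  induction L with
  | nil => intros; simp [pairsList0]
  | cons a M ih =>
    intro h0L hnd hxL hdist
    have haM : a ∉ M := (List.nodup_cons.mp hnd).1
    have hndM : M.Nodup := (List.nodup_cons.mp hnd).2
    have h0M : (0 : Fin m) ∉ M := fun h => h0L (List.mem_cons_of_mem _ h)
    have ha0 : a ≠ 0 := fun h => h0L (h ▸ List.mem_cons_self)
    have hxa : x ≠ u a := hxL a (List.mem_cons_self)
    have hxM : ∀ p ∈ M, x ≠ u p := fun p hp => hxL p (List.mem_cons_of_mem _ hp)
    have haM2 : ∀ p ∈ M, u a ≠ u p := fun p hp =>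
      hdist a (List.mem_cons_self) p (List.mem_cons_of_mem _ hp)
        (fun h : a = p => haM (h ▸ hp))
    have hdistM : ∀ p ∈ M, ∀ q ∈ M, p ≠ q → u p ≠ u q := fun p hp q hq =>
      hdist p (List.mem_cons_of_mem _ hp) q (List.mem_cons_of_mem _ hq)
    have hcomp : ((fun q : Fin m × Fin m => cFactor q.1 q.2 (u q.1) (u q.2)) ∘
        fun b => (a, b)) = fun b => cFactor a b (u a) (u b) := rfl
    simp only [pairsList0, List.map_cons, List.prod_cons, List.map_append, List.prod_append,
      List.reverse_cons, List.map_map, hcomp]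
    set FM := (M.map fun p => cFactor 0 p x (u p)).prod with hFM
    set AM := (M.map fun b => cFactor a b (u a) (u b)).prod with hAM
    set TM := ((pairsList0 M).map fun q => cFactor q.1 q.2 (u q.1) (u q.2)).prod with hTM
    set FMrev := (M.reverse.map fun p => cFactor 0 p x (u p)).prod with hFMrev
    set r0a := cFactor 0 a x (u a) with hr0a
    have hstep : r0a * FM * AM = AM * FM * r0a :=
      ga_step1 x u a M ha0 haM h0M hndM hxa hxM haM2
    have hcomm : r0a * TM = TM * r0a := by
      rw [hTM]
      refine (Commute.list_prod_right _ r0a fun y hy => ?_).eq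
      obtain ⟨q, hq, rfl⟩ := List.mem_map.mp hy
      obtain ⟨hq1, hq2⟩ := mem_pairsList0 hq
      exact cFactor_comm (fun h : (0 : Fin m) = q.1 => h0M (h ▸ hq1))
        (fun h : (0 : Fin m) = q.2 => h0M (h ▸ hq2))
        (fun h : a = q.1 => haM (h ▸ hq1)) (fun h : a = q.2 => haM (h ▸ hq2))
        x (u a) (u q.1) (u q.2)
    have hIH : FM * TM = TM * FMrev := ih h0M hndM hxM hdistM
    have goal2 : r0a * FM * (AM * TM) = AM * TM * (FMrev * r0a) := by
      calc r0a * FM * (AM * TM)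
          = (r0a * FM * AM) * TM := by noncomm_ring
        _ = (AM * FM * r0a) * TM := by rw [hstep]
        _ = AM * FM * (r0a * TM) := by noncomm_ring
        _ = AM * FM * (TM * r0a) := by rw [hcomm]
        _ = AM * (FM * TM) * r0a := by noncomm_ring
        _ = AM * (TM * FMrev) * r0a := by rw [hIH]
        _ = AM * TM * (FMrev * r0a) := by noncomm_ring
    simpa [mul_assoc] using goal2

/- revPerm facts -/
private theorem revPerm_zero (n : ℕ) : revPerm n (0 : Fin (n + 1)) = 0 := by
  simp [revPerm, Function.Involutive.coe_toPerm]

private theorem revPerm_succ {n : ℕ} (k : Fin n) : revPerm n k.succ = k.rev.succ := by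
  simp only [revPerm, Function.Involutive.coe_toPerm]
  show (if h : ((k.succ : Fin (n + 1)) : ℕ) = 0 then k.succ
    else ⟨n + 1 - ((k.succ : Fin (n + 1)) : ℕ), _⟩) = k.rev.succ
  rw [dif_neg (by simp [Fin.val_succ])]
  have hk := k.isLt
  ext
  simp only [Fin.val_succ, Fin.val_rev]
  omega

/- the homomorphism from the group algebra to matrices -/
private theorem permMat_one (L n : ℕ) : permMat (L := L) (1 : Equiv.Perm (Fin n)) = 1 := by
  funext f g
  simp [permMat, Matrix.one_apply, eq_comm]

private theorem permMat_mul (L n : ℕ) (s t : Equiv.Perm (Fin n)) :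
    permMat (L := L) (s * t) = permMat s * permMat t := by
  funext f g
  rw [Matrix.mul_apply]
  simp only [permMat, ite_mul, one_mul, zero_mul]
  rw [Finset.sum_ite_eq' Finset.univ ((f ∘ ⇑s : TIdx L n))
    (fun h => if g = h ∘ ⇑t then (1 : ℂ) else 0)]
  simp only [Finset.mem_univ, if_true]
  congr 1

private noncomputable def permHomM (L n : ℕ) : Equiv.Perm (Fin n) →* TOp ℂ L n where
  toFun := permMat
  map_one' := permMat_one L n
  map_mul' := permMat_mul L n

private noncomputable def gaHom (L n : ℕ) : GA n →ₐ[ℂ] TOp ℂ L n :=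
  MonoidAlgebra.lift ℂ (TOp ℂ L n) (Equiv.Perm (Fin n)) (permHomM L n)

private theorem gaHom_of (L n : ℕ) (s : Equiv.Perm (Fin n)) :
    gaHom L n (of ℂ (Equiv.Perm (Fin n)) s) = permMat s := by
  simp [gaHom, MonoidAlgebra.lift_of, permHomM]

private theorem gaHom_cFactor (L n : ℕ) (k l : Fin n) (u v : ℂ) :
    gaHom L n (cFactor k l u v) = Rmat L k l u v := by
  rw [cFactor_def]
  rw [map_sub, _root_.map_one, _root_.map_smul, gaHom_of]
  rfl

end Statement16Aux


theorem statement_16 (N n : ℕ) (hN : 1 ≤ N) (hn : 1 ≤ n)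
    (x : ℂ) (xs : Fin n → ℂ) (hx : ∀ k, x ≠ xs k)
    (hxs : ∀ i j : Fin n, i ≠ j → xs i ≠ xs j) :
    ((List.finRange n).map (fun k => Rmat N (0 : Fin (n + 1)) k.succ x (xs k))).prod *
      ((lexPairs n).map (fun p => Rmat N p.1.succ p.2.succ (xs p.1) (xs p.2))).prod *
      permMat (L := N) (revPerm n)
    = ((lexPairs n).map (fun p => Rmat N p.1.succ p.2.succ (xs p.1) (xs p.2))).prod *
      permMat (L := N) (revPerm n) *
      ((List.finRange n).map (fun k => Rmat N (0 : Fin (n + 1)) k.succ x (xs k.rev))).prod := by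
  classical
  set u : Fin (n + 1) → ℂ := Fin.cases x xs with hu
  have hu0 : ∀ k : Fin n, u k.succ = xs k := fun k => by simp [hu]
  set L : List (Fin (n + 1)) := (List.finRange n).map Fin.succ with hL
  have h0L : (0 : Fin (n + 1)) ∉ L := fun h => by
    obtain ⟨k, -, hk⟩ := List.mem_map.mp h
    exact Fin.succ_ne_zero k hk
  have hnd : L.Nodup := List.Nodup.map (Fin.succ_injective n) (List.nodup_finRange n)
  have hxL : ∀ p ∈ L, x ≠ u p := fun p hp => by
    obtain ⟨k, -, rfl⟩ := List.mem_map.mp hp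
    rw [hu0]; exact hx k
  have hdist : ∀ p ∈ L, ∀ q ∈ L, p ≠ q → u p ≠ u q := fun p hp q hq hpq => by
    obtain ⟨k, -, rfl⟩ := List.mem_map.mp hp
    obtain ⟨k', -, rfl⟩ := List.mem_map.mp hq
    rw [hu0, hu0]
    exact hxs k k' fun h => hpq (congrArg Fin.succ h)
  have hmain := ga_main x u L h0L hnd hxL hdist
  have hF : ((List.finRange n).map fun k => cFactor (0 : Fin (n + 1)) k.succ x (xs k))
      = L.map fun p => cFactor 0 p x (u p) := by
    rw [hL, List.map_map]
    congr 1
  have hT : ((lexPairs n).map fun p => cFactor p.1.succ p.2.succ (xs p.1) (xs p.2))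
      = (pairsList0 L).map fun q => cFactor q.1 q.2 (u q.1) (u q.2) := by
    rw [hL, pairsList0_map, ← lexPairs_eq, List.map_map]
    congr 1
  have hFrev : (L.reverse.map fun p => cFactor (0 : Fin (n + 1)) p x (u p))
      = (List.finRange n).map fun k => cFactor (0 : Fin (n + 1)) k.rev.succ x (xs k.rev) := by
    rw [hL, ← List.map_reverse, List.finRange_reverse, List.map_map, List.map_map]
    congr 1
  have hconj : MonoidAlgebra.of ℂ (Equiv.Perm (Fin (n + 1))) (revPerm n) *
      ((List.finRange n).map fun k => cFactor (0 : Fin (n + 1)) k.succ x (xs k.rev)).prod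
      = ((List.finRange n).map fun k => cFactor (0 : Fin (n + 1)) k.rev.succ x (xs k.rev)).prod *
        MonoidAlgebra.of ℂ (Equiv.Perm (Fin (n + 1))) (revPerm n) := by
    simpa only [revPerm_succ] using
      of_mul_cprod (revPerm n) (revPerm_zero n) (List.finRange n) Fin.succ
        (fun k => xs k.rev) x
  have hga : ((List.finRange n).map fun k => cFactor (0 : Fin (n + 1)) k.succ x (xs k)).prod *
      ((lexPairs n).map fun p => cFactor p.1.succ p.2.succ (xs p.1) (xs p.2)).prod *
      MonoidAlgebra.of ℂ (Equiv.Perm (Fin (n + 1))) (revPerm n)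
      = ((lexPairs n).map fun p => cFactor p.1.succ p.2.succ (xs p.1) (xs p.2)).prod *
        MonoidAlgebra.of ℂ (Equiv.Perm (Fin (n + 1))) (revPerm n) *
        ((List.finRange n).map fun k => cFactor (0 : Fin (n + 1)) k.succ x (xs k.rev)).prod := by
    rw [hF, hT]
    conv_rhs => rw [mul_assoc, hconj, ← hFrev, ← mul_assoc, ← hmain]
  have hmat := congrArg (gaHom N (n + 1)) hga
  simpa only [_root_.map_mul, map_list_prod, List.map_map, Function.comp_def,
    gaHom_cFactor, gaHom_of] using hmat

end
end

section
/- Let μ be a partition of m with parts μ_1 ≥ μ_2 ≥ …, and let c_1,…,c_m be the contents j − i of the m boxes (i,j) of the Young diagram of μ, listed in any order. Then the identity ∏_{k=1}^{m} ((x − c_k)^2 − 1)/(x − c_k)^2 = ∏_{i≥1} (x + i)(x − μ_i + i − 1) / ((x − μ_i + i)(x + i − 1)) holds as rational functions of x (in the product over i, only finitely many factors differ from 1). Equivalently, g_μ(x)·h(x) = 1, where g_μ(x) = ∏_{k≥1} (x − μ_k + k)(x + k − 1)/((x − μ_k + k − 1)(x + k)) and h(x) = ∏_{k=1}^{m} ((x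 − c_k)^2 − 1)/(x − c_k)^2. -/
open scoped BigOperators
open scoped Classical
open Matrix

noncomputable section

lemma telescope18 (y : ℂ) : ∀ n : ℕ, (∀ j : ℕ, j < n → y - j ≠ 0) → y + 1 ≠ 0 →
    y - n ≠ 0 → y ≠ 0 →
    ∏ j ∈ Finset.range n, ((y - j)^2 - 1)/(y - j)^2
      = (y + 1) * (y - n) / ((y - n + 1) * y)
  | 0, h0, h1, h2, h3 => by simp; field_simp
  | (n+1), h0, h1, h2, h3 => by
    have hn : y - n ≠ 0 := h0 n (Nat.lt_succ_self n)
    have hn1 : y - n + 1 ≠ 0 := by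
      cases n with
      | zero => simpa using h1
      | succ k =>
        have hk := h0 k (by omega)
        push_cast at hk
        push_cast; intro h; apply hk; linear_combination h
    rw [Finset.prod_range_succ,
      telescope18 y n (fun j hj => h0 j (hj.trans (Nat.lt_succ_self n))) h1 hn h3]
    push_cast at h2 ⊢
    rw [div_mul_div_comm, div_eq_div_iff]
    · ring
    · exact mul_ne_zero (mul_ne_zero hn1 h3) (pow_ne_zero _ hn)
    · apply mul_ne_zero ?_ h3
      intro h; apply hn; linear_combination h


theorem statement_18 (m : ℕ) (mu : ℕ → ℕ) (hmu : IsPartitionOf m mu)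
    (bx : Fin m → ℕ × ℕ)
    (hmem : ∀ k, (bx k).2 < mu (bx k).1)
    (hinj : Function.Injective bx)
    (hsurj : ∀ i j : ℕ, j < mu i → ∃ k, bx k = (i, j))
    (x : ℂ)
    (hc : ∀ k : Fin m, x ≠ ((bx k).2 : ℂ) - ((bx k).1 : ℂ))
    (hden : ∀ i : ℕ, i < m →
      x + i ≠ 0 ∧ x + i + 1 ≠ 0 ∧ x - mu i + i ≠ 0 ∧ x - mu i + i + 1 ≠ 0) :
    (∏ k : Fin m,
        ((x - (((bx k).2 : ℂ) - ((bx k).1 : ℂ))) ^ 2 - 1) /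
          (x - (((bx k).2 : ℂ) - ((bx k).1 : ℂ))) ^ 2)
      = (∏ i ∈ Finset.range m,
          ((x + i + 1) * (x - mu i + i)) / ((x - mu i + i + 1) * (x + i))) ∧
    (∏ i ∈ Finset.range m,
        ((x - mu i + i + 1) * (x + i)) / ((x - mu i + i) * (x + i + 1))) *
      (∏ k : Fin m,
        ((x - (((bx k).2 : ℂ) - ((bx k).1 : ℂ))) ^ 2 - 1) /
          (x - (((bx k).2 : ℂ) - ((bx k).1 : ℂ))) ^ 2) = 1 := by
  obtain ⟨hanti, hm0, hsum⟩ := hmu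
  have hrow : ∀ k : Fin m, (bx k).1 < m := by
    intro k
    by_contra h
    push_neg at h
    have h1 : mu (bx k).1 ≤ mu m := hanti h
    have h2 := hmem k
    omega
  have hcne : ∀ i j : ℕ, j < mu i → x + i - j ≠ 0 := by
    intro i j hj
    obtain ⟨k, hk⟩ := hsurj i j hj
    have := hc k
    rw [hk] at this
    simp only at this
    intro h
    exact this (by linear_combination h)
  set f : ℕ × ℕ → ℂ := fun p =>
    ((x - ((p.2 : ℂ) - (p.1 : ℂ))) ^ 2 - 1) / (x - ((p.2 : ℂ) - (p.1 : ℂ))) ^ 2 with hf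
  have key : (∏ k : Fin m, f (bx k))
      = ∏ i ∈ Finset.range m, ∏ j ∈ Finset.range (mu i), f (i, j) := by
    rw [← Finset.prod_sigma (Finset.range m) (fun i => Finset.range (mu i))
      (fun p => f (p.1, p.2))]
    refine Finset.prod_nbij (fun k => ⟨(bx k).1, (bx k).2⟩) ?_ ?_ ?_ ?_
    · intro k _
      simp only [Finset.mem_sigma, Finset.mem_range]
      exact ⟨hrow k, hmem k⟩
    · intro a _ b _ hab
      apply hinj
      simp only [Sigma.mk.inj_iff] at hab
      exact Prod.ext hab.1 (eq_of_heq hab.2)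
    · intro p hp
      simp only [Finset.coe_sigma, Set.mem_sigma_iff, Finset.mem_coe, Finset.mem_range] at hp
      obtain ⟨k, hk⟩ := hsurj p.1 p.2 hp.2
      exact ⟨k, by simp, by simp [hk]⟩
    · intro k _
      rfl
  have hA : (∏ k : Fin m, f (bx k))
      = ∏ i ∈ Finset.range m,
          ((x + i + 1) * (x - mu i + i)) / ((x - mu i + i + 1) * (x + i)) := by
    rw [key]
    apply Finset.prod_congr rfl
    intro i hi
    obtain ⟨d1, d2, d3, d4⟩ := hden i (Finset.mem_range.mp hi)
    have step : ∏ j ∈ Finset.range (mu i), f (i, j)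
        = ((x + i) + 1) * ((x + i) - mu i) / (((x + i) - mu i + 1) * (x + i)) := by
      have := telescope18 (x + i) (mu i)
        (fun j hj => hcne i j hj) d2 (by intro h; exact d3 (by linear_combination h)) d1
      rw [← this]
      apply Finset.prod_congr rfl
      intro j _
      simp only [hf]
      ring_nf
    rw [step]
    ring_nf
  refine ⟨hA, ?_⟩
  rw [hA, ← Finset.prod_mul_distrib]
  apply Finset.prod_eq_one
  intro i hi
  obtain ⟨d1, d2, d3, d4⟩ := hden i (Finset.mem_range.mp hi)
  field_simp
end
end
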